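/- Let n ≥ 1 be real, f ∈ (0,1), and 0 < ε₁ ≤ ε₂ with ε₂/ε₁ ≥ R = 1 + 8/(ε₁² n f). Then for all w₁, w₂ ≥ 0 satisfying f w₁ + (1−f) w₂ = 1/n, one has Φ(w₁,w₂) ≥ Φ(w₁*, w₂*) = R/(4n(f + (1−f)R)), where w₁* = 1/(n(f + (1−f)R)), w₂* = R/(n(f + (1−f)R)), and Φ(w₁,w₂) = n (f w₁² + (1−f) w₂²)/4 + 2 · max{w₁/ε₁, w₂/ε₂}². Moreover, the point (w₁*, w₂*) satisfies the constraint. -/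

import Mathlib

/-!
Since `ε₂ / ε₁ ≥ R`, the candidate point has `w₂* / ε₂ ≤ w₁* / ε₁`, so there the maximum in `Φ` is
attained by the first group; at any other feasible point the maximum is at least `w₁ / ε₁`.
Hence it suffices to minimise the quadratic `n (f w₁² + (1 − f) w₂²) / 4 + 2 (w₁ / ε₁)²`, which
by the choice of `R` equals `n (f R w₁² + (1 − f) w₂²) / 4`, on the line `f w₁ + (1 − f) w₂ = 1 / n`.
That is a weighted Cauchy–Schwarz inequality, attained exactly when `w₂ = R w₁`.
-/

noncomputable section

def Phi (n f ε₁ ε₂ w₁ w₂ : ℝ) : ℝ :=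
  n * (f * w₁ ^ 2 + (1 - f) * w₂ ^ 2) / 4 + 2 * (max (w₁ / ε₁) (w₂ / ε₂)) ^ 2

section WeightedLeastSquares

variable {a b R m x y : ℝ}

theorem mul_sq_add_add_mul_sq_sub (a b R x y : ℝ) :
    R * (a * x + b * y) ^ 2 + a * b * (R * x - y) ^ 2
      = (a + b * R) * (a * R * x ^ 2 + b * y ^ 2) := by
  ring

theorem mul_sq_add_le (hab : 0 ≤ a * b) :
    R * (a * x + b * y) ^ 2 ≤ (a + b * R) * (a * R * x ^ 2 + b * y ^ 2) := by
  rw [← mul_sq_add_add_mul_sq_sub]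
  exact le_add_of_nonneg_right (mul_nonneg hab (sq_nonneg _))

theorem div_le_weighted_sq_of_add_eq (hab : 0 ≤ a * b) (hS : 0 < a + b * R)
    (h : a * x + b * y = 1 / m) :
    R * (1 / m) ^ 2 / (a + b * R) ≤ a * R * x ^ 2 + b * y ^ 2 := by
  rw [div_le_iff₀' hS, ← h]
  exact mul_sq_add_le hab

theorem weighted_add_optimum (hm : m ≠ 0) (hS : a + b * R ≠ 0) :
    a * (1 / (m * (a + b * R))) + b * (R / (m * (a + b * R))) = 1 / m := by
  field_simp

theorem weighted_sq_optimum (a b R m : ℝ) :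
    a * R * (1 / (m * (a + b * R))) ^ 2 + b * (R / (m * (a + b * R))) ^ 2
      = R * (1 / m) ^ 2 / (a + b * R) := by
  field_simp

end WeightedLeastSquares

section Phi

variable {n f ε₁ ε₂ w₁ w₂ : ℝ}

theorem Phi_eq_of_div_le (h : w₂ / ε₂ ≤ w₁ / ε₁) :
    Phi n f ε₁ ε₂ w₁ w₂ = n * (f * w₁ ^ 2 + (1 - f) * w₂ ^ 2) / 4 + 2 * (w₁ / ε₁) ^ 2 := by
  rw [Phi, max_eq_left h]

theorem le_Phi (h : 0 ≤ w₁ / ε₁) :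
    n * (f * w₁ ^ 2 + (1 - f) * w₂ ^ 2) / 4 + 2 * (w₁ / ε₁) ^ 2 ≤ Phi n f ε₁ ε₂ w₁ w₂ := by
  unfold Phi
  gcongr
  exact le_max_left _ _

theorem quadratic_eq_of_eq_one_add {R : ℝ} (hR : R = 1 + 8 / (ε₁ ^ 2 * n * f))
    (hε₁ : ε₁ ≠ 0) (hn : n ≠ 0) (hf : f ≠ 0) :
    n * (f * w₁ ^ 2 + (1 - f) * w₂ ^ 2) / 4 + 2 * (w₁ / ε₁) ^ 2
      = n / 4 * (f * R * w₁ ^ 2 + (1 - f) * w₂ ^ 2) := by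
  subst hR
  field_simp
  ring

end Phi

theorem optimal_weights_regime_B_general
    (n f ε₁ ε₂ R : ℝ)
    (hn : 1 ≤ n) (hf0 : 0 < f) (hf1 : f < 1)
    (hε₁ : 0 < ε₁)
    (hR : R = 1 + 8 / (ε₁ ^ 2 * n * f))
    (hrR : R ≤ ε₂ / ε₁) :
    (f * (1 / (n * (f + (1 - f) * R))) + (1 - f) * (R / (n * (f + (1 - f) * R)))
        = 1 / n) ∧
    (Phi n f ε₁ ε₂ (1 / (n * (f + (1 - f) * R))) (R / (n * (f + (1 - f) * R)))
        = R / (4 * n * (f + (1 - f) * R))) ∧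
    ∀ w₁ w₂ : ℝ, 0 ≤ w₁ → 0 ≤ w₂ → f * w₁ + (1 - f) * w₂ = 1 / n →
      Phi n f ε₁ ε₂ (1 / (n * (f + (1 - f) * R))) (R / (n * (f + (1 - f) * R)))
        ≤ Phi n f ε₁ ε₂ w₁ w₂ := by
  have hn0 : 0 < n := by linarith
  have hR1 : 1 < R := by
    rw [hR]
    exact lt_add_of_pos_right 1 (by positivity)
  have hS : 0 < f + (1 - f) * R := by nlinarith
  have hab : 0 ≤ f * (1 - f) := mul_nonneg hf0.le (by linarith)
  have hquad := fun w₁ w₂ ↦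
    quadratic_eq_of_eq_one_add (w₁ := w₁) (w₂ := w₂) hR hε₁.ne' hn0.ne' hf0.ne'
  have hmax : R / (n * (f + (1 - f) * R)) / ε₂ ≤ 1 / (n * (f + (1 - f) * R)) / ε₁ := by
    have hRε : R * ε₁ ≤ ε₂ := (le_div_iff₀ hε₁).mp hrR
    have hε₂ : 0 < ε₂ := by nlinarith
    rw [div_div, div_div, div_le_div_iff₀ (by positivity) (by positivity)]
    nlinarith [mul_pos hn0 hS]
  have hval : Phi n f ε₁ ε₂ (1 / (n * (f + (1 - f) * R))) (R / (n * (f + (1 - f) * R)))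
      = n / 4 * (R * (1 / n) ^ 2 / (f + (1 - f) * R)) := by
    rw [Phi_eq_of_div_le hmax, hquad, weighted_sq_optimum]
  refine ⟨weighted_add_optimum hn0.ne' hS.ne', by rw [hval]; field_simp, ?_⟩
  intro w₁ w₂ hw₁ _ hw
  calc Phi n f ε₁ ε₂ (1 / (n * (f + (1 - f) * R))) (R / (n * (f + (1 - f) * R)))
      ≤ n / 4 * (f * R * w₁ ^ 2 + (1 - f) * w₂ ^ 2) := by
        rw [hval]
        gcongr
        exact div_le_weighted_sq_of_add_eq hab hS hw
    _ = n * (f * w₁ ^ 2 + (1 - f) * w₂ ^ 2) / 4 + 2 * (w₁ / ε₁) ^ 2 := (hquad w₁ w₂).symm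
    _ ≤ Phi n f ε₁ ε₂ w₁ w₂ := le_Phi (by positivity)

theorem optimal_weights_regime_B
    (n f ε₁ ε₂ R : ℝ)
    (hn : 1 ≤ n) (hf0 : 0 < f) (hf1 : f < 1)
    (hε₁ : 0 < ε₁) (hε₁₂ : ε₁ ≤ ε₂)
    (hR : R = 1 + 8 / (ε₁ ^ 2 * n * f))
    (hrR : R ≤ ε₂ / ε₁) :
    (f * (1 / (n * (f + (1 - f) * R))) + (1 - f) * (R / (n * (f + (1 - f) * R)))
        = 1 / n) ∧
    (Phi n f ε₁ ε₂ (1 / (n * (f + (1 - f) * R))) (R / (n * (f + (1 - f) * R)))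
        = R / (4 * n * (f + (1 - f) * R))) ∧
    ∀ w₁ w₂ : ℝ, 0 ≤ w₁ → 0 ≤ w₂ → f * w₁ + (1 - f) * w₂ = 1 / n →
      Phi n f ε₁ ε₂ (1 / (n * (f + (1 - f) * R))) (R / (n * (f + (1 - f) * R)))
        ≤ Phi n f ε₁ ε₂ w₁ w₂ :=
  optimal_weights_regime_B_general n f ε₁ ε₂ R hn hf0 hf1 hε₁ hR hrR
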